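/- The sets X and Y are disjoint: X ∩ Y = ∅. Equivalently, no vector of the form a·u + b·v + c·w with a,b,c all positive or all negative can be written as Rⁱ·q for i ∈ {1,2,3} and q = x·u + y·v + z·w with x,y,z all positive or all negative. -/

import Mathlib

open Matrix

/-- The matrix `R`. -/
def R : Matrix (Fin 3) (Fin 3) ℝ := !![0,0,-1; 1,0,-1; 0,1,-1]

/-- The matrix `T`. -/
def T : Matrix (Fin 3) (Fin 3) ℝ := !![-1,0,0; 2,1,0; -4,0,1]

/-- The vector `u = (1,-2,1)`. -/
def u : Fin 3 → ℝ := ![1,-2,1]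

/-- The vector `v = (1,0,3)`. -/
def v : Fin 3 → ℝ := ![1,0,3]

/-- The vector `w = (0,-1,1)`. -/
def w : Fin 3 → ℝ := ![0,-1,1]

/-- The open cone `C` generated by `u`, `v`, `w`. -/
def C : Set (Fin 3 → ℝ) :=
  {p | ∃ a b c : ℝ, 0 < a ∧ 0 < b ∧ 0 < c ∧ p = a • u + b • v + c • w}

/-- `X = C ∪ (−C)`. -/
def X : Set (Fin 3 → ℝ) := C ∪ (-C)

/-- `Y = R·X ∪ R²·X ∪ R³·X`. -/
def Y : Set (Fin 3 → ℝ) :=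
  R.mulVec '' X ∪ (R ^ 2).mulVec '' X ∪ (R ^ 3).mulVec '' X

/-!
In the basis `(u, v, w)` the cone `C` is the open positive octant, and `R` acts by
`(a, b, c) ↦ (-b, -a - 2b - c, 4b + c)`. For each of `R`, `R²`, `R³` the `u`- and `w`-coordinates
of the image of a point of `C` have opposite signs, so the product of these two coordinates is
positive on `X` and negative on `Y`.
-/

lemma R_mulVec_lincomb (a b c : ℝ) :
    R *ᵥ (a • u + b • v + c • w) = (-b) • u + (-a - 2 * b - c) • v + (4 * b + c) • w := by
  ext i
  fin_cases i <;> simp [R, u, v, w, mulVec, dotProduct, Fin.sum_univ_three] <;> ring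

lemma R_sq_mulVec_lincomb (a b c : ℝ) :
    (R ^ 2) *ᵥ (a • u + b • v + c • w) =
      (a + 2 * b + c) • u + (2 * a + b + c) • v + (-4 * a - 4 * b - 3 * c) • w := by
  rw [pow_two, ← mulVec_mulVec, R_mulVec_lincomb, R_mulVec_lincomb]
  module

lemma R_cube_mulVec_lincomb (a b c : ℝ) :
    (R ^ 3) *ᵥ (a • u + b • v + c • w) = (-2 * a - b - c) • u + (-a) • v + (4 * a + c) • w := by
  rw [pow_succ, ← mulVec_mulVec, R_mulVec_lincomb, R_sq_mulVec_lincomb]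
  module

def uwProd (p : Fin 3 → ℝ) : ℝ := (![3, -1, -1] ⬝ᵥ p) * (![-3, -1, 1] ⬝ᵥ p)

lemma uwProd_lincomb (a b c : ℝ) : uwProd (a • u + b • v + c • w) = 8 * a * c := by
  simp only [uwProd, dotProduct, Fin.sum_univ_three, Pi.add_apply, Pi.smul_apply, smul_eq_mul, u, v,
    w, cons_val_zero, cons_val_one, cons_val_two, tail_cons, head_cons]
  ring

lemma uwProd_neg (p : Fin 3 → ℝ) : uwProd (-p) = uwProd p := by
  rw [uwProd, uwProd, dotProduct_neg, dotProduct_neg, neg_mul_neg]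

lemma uwProd_pos_of_mem_C {p : Fin 3 → ℝ} (hp : p ∈ C) : 0 < uwProd p := by
  obtain ⟨a, b, c, ha, -, hc, rfl⟩ := hp
  rw [uwProd_lincomb]
  positivity

lemma uwProd_pos_of_mem_X {p : Fin 3 → ℝ} (hp : p ∈ X) : 0 < uwProd p := by
  rcases hp with hp | hp
  · exact uwProd_pos_of_mem_C hp
  · simpa [uwProd_neg] using uwProd_pos_of_mem_C hp

lemma uwProd_R_mulVec_neg {q : Fin 3 → ℝ} (hq : q ∈ C) : uwProd (R *ᵥ q) < 0 := by
  obtain ⟨a, b, c, -, hb, hc, rfl⟩ := hq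
  rw [R_mulVec_lincomb, uwProd_lincomb]
  nlinarith [mul_pos hb hc]

lemma uwProd_R_sq_mulVec_neg {q : Fin 3 → ℝ} (hq : q ∈ C) : uwProd ((R ^ 2) *ᵥ q) < 0 := by
  obtain ⟨a, b, c, ha, hb, hc, rfl⟩ := hq
  rw [R_sq_mulVec_lincomb, uwProd_lincomb]
  nlinarith [mul_pos ha hb, mul_pos ha hc, mul_pos hb hc]

lemma uwProd_R_cube_mulVec_neg {q : Fin 3 → ℝ} (hq : q ∈ C) : uwProd ((R ^ 3) *ᵥ q) < 0 := by
  obtain ⟨a, b, c, ha, hb, hc, rfl⟩ := hq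
  rw [R_cube_mulVec_lincomb, uwProd_lincomb]
  nlinarith [mul_pos ha hb, mul_pos ha hc, mul_pos hb hc]

lemma uwProd_mulVec_neg_of_mem_X {M : Matrix (Fin 3) (Fin 3) ℝ}
    (hM : ∀ q ∈ C, uwProd (M *ᵥ q) < 0) {q : Fin 3 → ℝ} (hq : q ∈ X) : uwProd (M *ᵥ q) < 0 := by
  rcases hq with hq | hq
  · exact hM q hq
  · simpa [mulVec_neg, uwProd_neg] using hM (-q) hq

lemma uwProd_neg_of_mem_Y {p : Fin 3 → ℝ} (hp : p ∈ Y) : uwProd p < 0 := by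
  rcases hp with (⟨q, hq, rfl⟩ | ⟨q, hq, rfl⟩) | ⟨q, hq, rfl⟩
  · exact uwProd_mulVec_neg_of_mem_X (fun _ => uwProd_R_mulVec_neg) hq
  · exact uwProd_mulVec_neg_of_mem_X (fun _ => uwProd_R_sq_mulVec_neg) hq
  · exact uwProd_mulVec_neg_of_mem_X (fun _ => uwProd_R_cube_mulVec_neg) hq

/-- The sets `X` and `Y` are disjoint. -/
theorem X_inter_Y_empty : X ∩ Y = ∅ :=
  Set.eq_empty_of_forall_notMem fun _ ⟨hX, hY⟩ =>
    (uwProd_pos_of_mem_X hX).not_gt (uwProd_neg_of_mem_Y hY)
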